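/- arXiv:2603.02822 — 2 statements merged into one kernel-verified Lean document; each statement's English description precedes it below -/
import Mathlib

section
/- A near-isometry T on H is a shift operator if and only if T is unitarily equivalent to an operator-valued weighted shift S on H²_{ker T*}(𝔻) whose weight sequence {T_n} consists of invertible operators on ker T* that are uniformly bounded below and are contractions. -/
open ContinuousLinearMap

/-- Near-isometry: bounded-below contraction with `T*ⁿ Tⁿ⁺¹ H ⊆ T H` for all `n`. -/
def IsNearIsometry {K : Type*} [NormedAddCommGroup K] [InnerProductSpace ℂ K]
    [CompleteSpace K] (T : K →L[ℂ] K) : Prop :=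
  (∃ δ > (0 : ℝ), ∀ x : K, δ * ‖x‖ ≤ ‖T x‖ ∧ ‖T x‖ ≤ ‖x‖) ∧
  ∀ n : ℕ, ∀ x : K, ∃ y : K, ((adjoint T) ^ n) ((T ^ (n + 1)) x) = T y

/-- `T` is a shift operator: there is a closed wandering subspace `W` with
`H = ⊕_{n ≥ 0} Tⁿ W`. -/
def IsShift {K : Type*} [NormedAddCommGroup K] [InnerProductSpace ℂ K]
    (T : K →L[ℂ] K) : Prop :=
  ∃ W : Submodule ℂ K, IsClosed (W : Set K) ∧
    (∀ i j : ℕ, i ≠ j → ∀ x ∈ W, ∀ y ∈ W, (inner ℂ ((T ^ i) x) ((T ^ j) y) : ℂ) = 0) ∧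
    (⨆ n : ℕ, W.map (T ^ n).toLinearMap).topologicalClosure = ⊤

/-!
If `W` is a generating wandering subspace of `T`, then `W ⟂ T H`, and for `u ∈ ker T*` the vector
`u - P_W u` is orthogonal to every `TⁿW`; hence `W = ker T*`. As `T` is bounded below, `Tⁿ` maps
`W` isomorphically onto `TⁿW`, and composing it with the inverse of `Aₙ = √((Tⁿ|_W)* Tⁿ|_W)` gives
an isometry `Vₙ : W → TⁿW`. The orthogonal decomposition `H = ⊕ₙ Vₙ W` identifies `H` with
`ℓ²(W)`, and in these coordinates `T` sends the `n`-th summand to the `(n+1)`-st with weight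
`Aₙ₊₁ Aₙ⁻¹`, whose norm bounds are those of `T`. Conversely, the first summand of a weighted shift
with invertible weights is a generating wandering subspace, and being a shift is invariant under
unitary equivalence.
-/

def IsWandering {K : Type*} [NormedAddCommGroup K] [InnerProductSpace ℂ K]
    (T : K →L[ℂ] K) (W : Submodule ℂ K) : Prop :=
  ∀ i j : ℕ, i ≠ j → ∀ x ∈ W, ∀ y ∈ W, inner ℂ ((T ^ i) x) ((T ^ j) y) = 0

theorem AntilipschitzWith.iterate {α : Type*} [PseudoEMetricSpace α] {K : NNReal} {f : α → α}
    (hf : AntilipschitzWith K f) : ∀ n : ℕ, AntilipschitzWith (K ^ n) f^[n]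
  | 0 => by simpa using AntilipschitzWith.id
  | n + 1 => by
    rw [pow_succ', Function.iterate_succ]
    exact (hf.iterate n).comp hf

section Polar

variable {E F : Type*} [NormedAddCommGroup E] [InnerProductSpace ℂ E] [CompleteSpace E]
  [NormedAddCommGroup F] [InnerProductSpace ℂ F] [CompleteSpace F]

theorem IsSelfAdjoint.surjective_of_antilipschitz {A : E →L[ℂ] E} (hA : IsSelfAdjoint A)
    {K : NNReal} (hK : AntilipschitzWith K A) : Function.Surjective A := by
  have : CompleteSpace A.range :=
    IsClosed.completeSpace_coe (hs := hK.isClosed_range A.uniformContinuous)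
  rw [← coe_coe, ← LinearMap.range_eq_top, ← Submodule.orthogonal_eq_bot_iff]
  simpa only [orthogonal_range, isSelfAdjoint_iff'.mp hA] using
    LinearMap.ker_eq_bot.mpr hK.injective

theorem ContinuousLinearMap.exists_continuousLinearEquiv_norm_apply_eq (C : E →L[ℂ] F)
    {K : NNReal} (hC : AntilipschitzWith K C) : ∃ A : E ≃L[ℂ] E, ∀ x, ‖A x‖ = ‖C x‖ := by
  set A : E →L[ℂ] E := CFC.sqrt (adjoint C ∘L C)
  have hpos : 0 ≤ adjoint C ∘L C := (nonneg_iff_isPositive _).mpr (isPositive_adjoint_comp_self C)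
  have hA : IsSelfAdjoint A := IsSelfAdjoint.of_nonneg (CFC.sqrt_nonneg _)
  have hnorm (x : E) : ‖A x‖ = ‖C x‖ := by
    rw [apply_norm_eq_sqrt_inner_adjoint_left, apply_norm_eq_sqrt_inner_adjoint_left,
      isSelfAdjoint_iff'.mp hA]
    congr 3
    exact congr($(CFC.sqrt_mul_sqrt_self _ hpos) x)
  have hAK : AntilipschitzWith K A := antilipschitz_of_bound A fun x => by
    simpa only [hnorm] using bound_of_antilipschitz C hC x
  refine ⟨.ofBijective A ?_ ?_, hnorm⟩
  · exact LinearMap.ker_eq_bot.mpr hAK.injective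
  · exact LinearMap.range_eq_top.mpr (hA.surjective_of_antilipschitz hAK)

end Polar

section Wandering

variable {H : Type*} [NormedAddCommGroup H] [InnerProductSpace ℂ H] [CompleteSpace H]

theorem eq_zero_of_forall_inner_pow_apply {T : H →L[ℂ] H} {W : Submodule ℂ H}
    (hgen : (⨆ n : ℕ, W.map (T ^ n).toLinearMap).topologicalClosure = ⊤) {z : H}
    (hz : ∀ n, ∀ x ∈ W, inner ℂ ((T ^ n) x) z = 0) : z = 0 := by
  have hz' : z ∈ (⨆ n : ℕ, W.map (T ^ n).toLinearMap)ᗮ := by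
    simp only [← Submodule.iInf_orthogonal, Submodule.mem_iInf, Submodule.mem_orthogonal,
      Submodule.mem_map]
    rintro n _ ⟨x, hx, rfl⟩
    exact hz n x hx
  rwa [Submodule.topologicalClosure_eq_top_iff.mp hgen, Submodule.mem_bot] at hz'

theorem eq_ker_adjoint_of_isWandering {T : H →L[ℂ] H} {W : Submodule ℂ H}
    (hW : IsClosed (W : Set H)) (hwand : IsWandering T W)
    (hgen : (⨆ n : ℕ, W.map (T ^ n).toLinearMap).topologicalClosure = ⊤) :
    W = LinearMap.ker (adjoint T).toLinearMap := by
  have : CompleteSpace W := hW.completeSpace_coe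
  have hpow (n : ℕ) (x : H) : (T ^ (n + 1)) x = T ((T ^ n) x) := by
    rw [pow_succ', mul_apply_eq_comp]
  apply le_antisymm
  · intro u hu
    rw [LinearMap.mem_ker, coe_coe]
    refine eq_zero_of_forall_inner_pow_apply hgen fun n x hx => ?_
    rw [adjoint_inner_right, ← hpow]
    simpa using hwand (n + 1) 0 n.succ_ne_zero x hx u hu
  · intro u (hu : adjoint T u = 0)
    rw [sub_eq_zero.mp (eq_zero_of_forall_inner_pow_apply (z := u - W.starProjection u) hgen ?_)]
    · exact W.starProjection_apply_mem u
    rintro (_ | n) x hx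
    · rw [pow_zero, one_apply_eq_self]
      exact Submodule.inner_right_of_mem_orthogonal hx (W.sub_starProjection_mem_orthogonal u)
    · rw [inner_sub_right, hpow, ← adjoint_inner_right, hu, inner_zero_right, ← hpow]
      simpa using hwand (n + 1) 0 n.succ_ne_zero x hx _ (W.starProjection_apply_mem u)

theorem exists_linearIsometryEquiv_lp_of_isWandering {T : H →L[ℂ] H} {W : Submodule ℂ H}
    (hW : IsClosed (W : Set H)) (hwand : IsWandering T W)
    (hgen : (⨆ n : ℕ, W.map (T ^ n).toLinearMap).topologicalClosure = ⊤)
    {K : NNReal} (hT : AntilipschitzWith K T) :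
    ∃ (A : ℕ → W ≃L[ℂ] W) (U : H ≃ₗᵢ[ℂ] lp (fun _ : ℕ => W) 2),
      (∀ n x, ‖A n x‖ = ‖(T ^ n) x‖) ∧
      ∀ n x, U.symm (lp.single 2 n x) = (T ^ n) ((A n).symm x) := by
  have : CompleteSpace W := hW.completeSpace_coe
  have hC (n : ℕ) : AntilipschitzWith (1 * K ^ n) ((T ^ n) ∘L W.subtypeL) := by
    rw [coe_comp, FunLike.coe_pow_eq_iterate]
    exact (hT.iterate n).comp W.subtypeₗᵢ.antilipschitz
  choose A hA using fun n => exists_continuousLinearEquiv_norm_apply_eq _ (hC n)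
  have hA' (n : ℕ) (x : W) : ‖(T ^ n) ((A n).symm x)‖ = ‖x‖ := by
    simpa using (hA n ((A n).symm x)).symm
  let V (n : ℕ) : W →ₗᵢ[ℂ] H :=
    { toLinearMap := ((T ^ n) ∘L W.subtypeL ∘L ((A n).symm : W →L[ℂ] W)).toLinearMap
      norm_map' := hA' n }
  have hortho : OrthogonalFamily ℂ (fun _ : ℕ => W) V := fun i j hij x y =>
    hwand i j hij _ ((A i).symm x).2 _ ((A j).symm y).2
  have hrange (n : ℕ) : LinearMap.range (V n).toLinearMap = W.map (T ^ n).toLinearMap := by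
    change LinearMap.range ((T ^ n).toLinearMap ∘ₗ W.subtype ∘ₗ ((A n).symm : W →ₗ[ℂ] W)) = _
    rw [LinearMap.range_comp, LinearMap.range_comp, LinearEquiv.range, Submodule.map_top,
      Submodule.range_subtype]
  have hsum : IsHilbertSum ℂ (fun _ : ℕ => W) V :=
    .mk hortho (by simp only [hrange, hgen, le_refl])
  exact ⟨A, hsum.linearIsometryEquiv, fun n x => hA n x, fun n x =>
    hsum.linearIsometryEquiv_symm_apply_single x⟩

theorem exists_weightedShift_model_of_isWandering {T : H →L[ℂ] H} {W : Submodule ℂ H}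
    (hW : IsClosed (W : Set H)) (hwand : IsWandering T W)
    (hgen : (⨆ n : ℕ, W.map (T ^ n).toLinearMap).topologicalClosure = ⊤)
    {δ : ℝ} (hδ : 0 < δ) (hT : ∀ x, δ * ‖x‖ ≤ ‖T x‖ ∧ ‖T x‖ ≤ ‖x‖) :
    ∃ w : ℕ → (W →L[ℂ] W), (∀ n, IsUnit (w n)) ∧
      (∀ n x, δ * ‖x‖ ≤ ‖w n x‖ ∧ ‖w n x‖ ≤ ‖x‖) ∧
      ∃ (S : lp (fun _ : ℕ => W) 2 →L[ℂ] lp (fun _ : ℕ => W) 2)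
        (U : H ≃ₗᵢ[ℂ] lp (fun _ : ℕ => W) 2),
        (∀ n x, S (lp.single 2 n x) = lp.single 2 (n + 1) (w n x)) ∧
        ∀ x, U (T x) = S (U x) := by
  have hanti : AntilipschitzWith (Real.toNNReal δ⁻¹) T := antilipschitz_of_bound T fun x => by
    rw [Real.coe_toNNReal _ (inv_nonneg.mpr hδ.le), le_inv_mul_iff₀ hδ]
    exact (hT x).1
  obtain ⟨A, U, hA, hU⟩ := exists_linearIsometryEquiv_lp_of_isWandering hW hwand hgen hanti
  let w (n : ℕ) : W ≃L[ℂ] W := (A n).symm.trans (A (n + 1))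
  have hpow (n : ℕ) (x : H) : (T ^ (n + 1)) x = T ((T ^ n) x) := by
    rw [pow_succ', mul_apply_eq_comp]
  have hnorm (n : ℕ) (x : W) : ‖(T ^ n) ((A n).symm x)‖ = ‖x‖ := by
    simpa using (hA n ((A n).symm x)).symm
  have hw (n : ℕ) (x : W) : ‖w n x‖ = ‖T ((T ^ n) ((A n).symm x))‖ := by
    simp [w, hA, hpow]
  let S : lp (fun _ : ℕ => W) 2 →L[ℂ] lp (fun _ : ℕ => W) 2 :=
    (U : H →L[ℂ] lp (fun _ : ℕ => W) 2) ∘L T ∘L (U.symm : lp (fun _ : ℕ => W) 2 →L[ℂ] H)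
  refine ⟨fun n => w n, fun n => (w n).toUnit.isUnit, fun n x => ?_, S, U, fun n x => ?_,
    fun x => by simp [S]⟩
  · change δ * ‖x‖ ≤ ‖w n x‖ ∧ ‖w n x‖ ≤ ‖x‖
    rw [hw, ← hnorm n x]
    exact hT _
  · apply U.symm.injective
    simp [S, hU, w, hpow]

end Wandering

section WeightedShift

variable {K : Type*} [NormedAddCommGroup K] [InnerProductSpace ℂ K]

theorem range_pow_apply_single_zero {w : ℕ → K →L[ℂ] K} (hw : ∀ n, Function.Surjective (w n))
    {S : lp (fun _ : ℕ => K) 2 →L[ℂ] lp (fun _ : ℕ => K) 2}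
    (hS : ∀ n x, S (lp.single 2 n x) = lp.single 2 (n + 1) (w n x)) (n : ℕ) :
    Set.range (fun a => (S ^ n) (lp.single 2 0 a)) = Set.range (lp.single 2 n) := by
  induction n with
  | zero => simp
  | succ n ih =>
    have hstep : S ∘ lp.single 2 n = lp.single 2 (n + 1) ∘ w n := funext (hS n)
    calc Set.range (fun a => (S ^ (n + 1)) (lp.single 2 0 a))
        = S '' Set.range (fun a => (S ^ n) (lp.single 2 0 a)) := by
          simp only [pow_succ', mul_apply_eq_comp, ← Set.range_comp, Function.comp_def]
      _ = Set.range (lp.single 2 (n + 1)) := by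
          rw [ih, ← Set.range_comp, hstep, (hw n).range_comp]

theorem isShift_of_weightedShift [CompleteSpace K] {w : ℕ → K →L[ℂ] K} (hw : ∀ n, IsUnit (w n))
    {S : lp (fun _ : ℕ => K) 2 →L[ℂ] lp (fun _ : ℕ => K) 2}
    (hS : ∀ n x, S (lp.single 2 n x) = lp.single 2 (n + 1) (w n x)) : IsShift S := by
  have hrange := range_pow_apply_single_zero
    (fun n => (ContinuousLinearMap.isUnit_iff_bijective.mp (hw n)).surjective) hS
  refine ⟨LinearMap.range (lp.lsingle (𝕜 := ℂ) 2 0), ?_, ?_, ?_⟩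
  · exact (lp.isometry_single 0).isClosedEmbedding.isClosed_range
  · rintro i j hij _ ⟨a, rfl⟩ _ ⟨b, rfl⟩
    obtain ⟨u, hu⟩ : (S ^ i) (lp.single 2 0 a) ∈ Set.range (lp.single 2 i) :=
      hrange i ▸ ⟨a, rfl⟩
    obtain ⟨v, hv⟩ : (S ^ j) (lp.single 2 0 b) ∈ Set.range (lp.single 2 j) :=
      hrange j ▸ ⟨b, rfl⟩
    simp only [lp.lsingle_apply]
    rw [← hu, ← hv, lp.inner_single_left, lp.single_apply_ne _ _ _ hij, inner_zero_right]
  · rw [Submodule.topologicalClosure_eq_top_iff, Submodule.eq_bot_iff]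
    intro z hz
    simp only [← Submodule.iInf_orthogonal, Submodule.mem_iInf, Submodule.mem_orthogonal,
      Submodule.mem_map] at hz
    ext i
    obtain ⟨a, ha⟩ : lp.single 2 i (z i) ∈ Set.range (fun a => (S ^ i) (lp.single 2 0 a)) :=
      hrange i ▸ ⟨z i, rfl⟩
    have hzi := hz i _ ⟨_, ⟨a, rfl⟩, ha⟩
    rw [lp.inner_single_left, inner_self_eq_zero] at hzi
    simpa using hzi

end WeightedShift

theorem IsShift.of_intertwining {E F : Type*} [NormedAddCommGroup E] [InnerProductSpace ℂ E]
    [NormedAddCommGroup F] [InnerProductSpace ℂ F] {T : E →L[ℂ] E} {S : F →L[ℂ] F}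
    (U : E ≃ₗᵢ[ℂ] F) (hU : ∀ x, U (T x) = S (U x)) (hS : IsShift S) : IsShift T := by
  obtain ⟨W, hW, hwand, hgen⟩ := hS
  have hUpow (n : ℕ) (x : E) : U ((T ^ n) x) = (S ^ n) (U x) := by
    induction n generalizing x with
    | zero => rfl
    | succ n ih => rw [pow_succ, mul_apply_eq_comp, ih, hU, pow_succ, mul_apply_eq_comp]
  have hmap (n : ℕ) : (W.map U.symm.toLinearEquiv.toLinearMap).map (T ^ n).toLinearMap =
      (W.map (S ^ n).toLinearMap).map U.symm.toLinearEquiv.toLinearMap := by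
    rw [← Submodule.map_comp, ← Submodule.map_comp]
    congr 1
    ext x
    change (T ^ n) (U.symm x) = U.symm ((S ^ n) x)
    rw [eq_comm, U.symm_apply_eq, hUpow, U.apply_symm_apply]
  refine ⟨W.map U.symm.toLinearEquiv.toLinearMap, ?_, ?_, ?_⟩
  · simpa [Submodule.map_coe] using U.symm.toHomeomorph.isClosedMap _ hW
  · rintro i j hij _ ⟨x, hx, rfl⟩ _ ⟨y, hy, rfl⟩
    rw [← U.inner_map_map]
    simpa only [LinearEquiv.coe_coe, LinearIsometryEquiv.coe_toLinearEquiv, hUpow,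
      U.apply_symm_apply] using hwand i j hij x hx y hy
  · rw [← Submodule.dense_iff_topologicalClosure_eq_top, iSup_congr hmap, ← Submodule.map_iSup,
      Submodule.map_coe]
    exact U.symm.surjective.denseRange.dense_image U.symm.continuous
      (Submodule.dense_iff_topologicalClosure_eq_top.mpr hgen)

theorem stmt5_general {H : Type*} [NormedAddCommGroup H] [InnerProductSpace ℂ H] [CompleteSpace H]
    (T : H →L[ℂ] H) (hT : IsNearIsometry T) :
    IsShift T ↔
      ∃ (Tseq : ℕ → (↥(LinearMap.ker (adjoint T).toLinearMap) →L[ℂ] ↥(LinearMap.ker (adjoint T).toLinearMap)))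
        (c : ℝ), 0 < c ∧ (∀ n, IsUnit (Tseq n)) ∧
        (∀ (n : ℕ) (x : ↥(LinearMap.ker (adjoint T).toLinearMap)),
          c * ‖x‖ ≤ ‖Tseq n x‖ ∧ ‖Tseq n x‖ ≤ ‖x‖) ∧
        ∃ (S : lp (fun _ : ℕ => ↥(LinearMap.ker (adjoint T).toLinearMap)) 2 →L[ℂ]
              lp (fun _ : ℕ => ↥(LinearMap.ker (adjoint T).toLinearMap)) 2)
          (U : H ≃ₗᵢ[ℂ] lp (fun _ : ℕ => ↥(LinearMap.ker (adjoint T).toLinearMap)) 2),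
          (∀ (n : ℕ) (x : ↥(LinearMap.ker (adjoint T).toLinearMap)),
            S (lp.single 2 n x) = lp.single 2 (n + 1) (Tseq n x)) ∧
          ∀ x : H, U (T x) = S (U x) := by
  obtain ⟨⟨δ, hδ, hTδ⟩, -⟩ := hT
  constructor
  · rintro ⟨W, hW, hwand, hgen⟩
    obtain ⟨w, hunit, hw, S, U, hS, hU⟩ :=
      exists_weightedShift_model_of_isWandering hW hwand hgen hδ hTδ
    have hWker := eq_ker_adjoint_of_isWandering hW hwand hgen
    subst hWker
    exact ⟨w, δ, hδ, hunit, hw, S, U, hS, hU⟩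
  · rintro ⟨w, -, -, hunit, -, S, U, hS, hU⟩
    have : CompleteSpace (LinearMap.ker (adjoint T).toLinearMap) :=
      (isClosed_ker (adjoint T)).completeSpace_coe
    exact (isShift_of_weightedShift hunit hS).of_intertwining U hU

/-- Analytic model for a near-isometry: a near-isometry `T` on `H` is a shift
operator iff it is unitarily equivalent to an operator-valued weighted shift `S`
on the `ker T*`-valued Hardy space (modelled as `ℓ²(ℕ, ker T*)`) whose weights are
invertible contractions on `ker T*`, uniformly bounded below. -/
theorem stmt5 {H : Type*} [NormedAddCommGroup H] [InnerProductSpace ℂ H] [CompleteSpace H]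
    (T : H →L[ℂ] H) (hT : IsNearIsometry T)
    [CompleteSpace (LinearMap.ker (adjoint T).toLinearMap)] :
    IsShift T ↔
      ∃ (Tseq : ℕ → (↥(LinearMap.ker (adjoint T).toLinearMap) →L[ℂ] ↥(LinearMap.ker (adjoint T).toLinearMap)))
        (c : ℝ), 0 < c ∧ (∀ n, IsUnit (Tseq n)) ∧
        (∀ (n : ℕ) (x : ↥(LinearMap.ker (adjoint T).toLinearMap)),
          c * ‖x‖ ≤ ‖Tseq n x‖ ∧ ‖Tseq n x‖ ≤ ‖x‖) ∧
        ∃ (S : lp (fun _ : ℕ => ↥(LinearMap.ker (adjoint T).toLinearMap)) 2 →L[ℂ]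
              lp (fun _ : ℕ => ↥(LinearMap.ker (adjoint T).toLinearMap)) 2)
          (U : H ≃ₗᵢ[ℂ] lp (fun _ : ℕ => ↥(LinearMap.ker (adjoint T).toLinearMap)) 2),
          (∀ (n : ℕ) (x : ↥(LinearMap.ker (adjoint T).toLinearMap)),
            S (lp.single 2 n x) = lp.single 2 (n + 1) (Tseq n x)) ∧
          ∀ x : H, U (T x) = S (U x) :=
  stmt5_general T hT
end

section
/- Let T = (T₁,...,Tₙ) be a doubly twisted near-isometry and A ⊆ {1,...,n}. Set W_A = ∩_{i ∈ A} ker T_i*. Then for every j ∉ A: (i) W_A reduces T_j; (ii) W_A ⊖ T_j W_A = W_{A ∪ {j}}; (iii) W_A reduces every U_ij and U_ij W_A = W_A; (iv) the restriction of T_j to W_A is a near-isometry. -/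
open ContinuousLinearMap

/-- `(T₁,…,Tₙ)` is a *doubly twisted near-isometry* with respect to the
commuting family of unitaries `U i j` (with the convention `U j i = (U i j)*`):
each `T i` is a near-isometry, `T_i* T_j = U_ij* T_j T_i*`,
`T_k U_ij = U_ij T_k`, and `T_i T_j = U_ij T_j T_i` for `i < j`. -/
def IsDoublyTwisted {K : Type*} [NormedAddCommGroup K] [InnerProductSpace ℂ K]
    [CompleteSpace K] {n : ℕ} (T : Fin n → K →L[ℂ] K)
    (U : Fin n → Fin n → K →L[ℂ] K) : Prop :=
  (∀ i, IsNearIsometry (T i)) ∧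
  (∀ i j, i ≠ j → U i j * adjoint (U i j) = 1 ∧ adjoint (U i j) * U i j = 1) ∧
  (∀ i j, i < j → U j i = adjoint (U i j)) ∧
  (∀ i j k l, i ≠ j → k ≠ l → U i j * U k l = U k l * U i j) ∧
  (∀ i j, i < j → adjoint (T i) * T j = adjoint (U i j) * (T j * adjoint (T i))) ∧
  (∀ k i j, i ≠ j → T k * U i j = U i j * T k) ∧
  (∀ i j, i < j → T i * T j = U i j * (T j * T i))

/-- `W_A = ∩_{i ∈ A} ker T_i*`. -/
noncomputable def WA {K : Type*} [NormedAddCommGroup K] [InnerProductSpace ℂ K] [CompleteSpace K]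
    {n : ℕ} (T : Fin n → K →L[ℂ] K) (A : Set (Fin n)) : Submodule ℂ K :=
  ⨅ i ∈ A, LinearMap.ker (adjoint (T i) : K →ₗ[ℂ] K)

/-!
An operator `B` with `T_i* B = C T_i*` for some `C` maps `ker T_i*` into itself. The twisted
relations give such intertwinings for `B = T_j, T_j*` (`j ≠ i`) and `B = U_kl, U_kl*`, so `W_A`
reduces all of them. If `W` is invariant under `T*`, then `x ∈ W` is orthogonal to `T W` iff
`T* x ⊥ W`, i.e. iff `T* x = 0`; this is (ii). Finally, `T_j` is injective and `W_A` reduces it, so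
`T_j y ∈ W_A` forces `y ∈ W_A`: the witness `y` in `T_j*ᵐ T_jᵐ⁺¹ x = T_j y` lies in `W_A`, which
gives (iv).
-/

theorem Commute.star_left_of_mem_unitary {R : Type*} [Monoid R] [StarMul R] {a u : R}
    (hu : u ∈ unitary R) (h : Commute a u) : Commute (star a) u :=
  calc star a * u = u * star (a * u) * u := by
        rw [star_mul, ← mul_assoc u, Unitary.mul_star_self_of_mem hu, one_mul]
    _ = u * star a := by
        rw [h.eq, star_mul, mul_assoc, mul_assoc, Unitary.star_mul_self_of_mem hu, mul_one]

theorem Submodule.map_eq_self_of_rightInverse {R M : Type*} [Semiring R] [AddCommMonoid M]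
    [Module R M] {W : Submodule R M} {f g : M →ₗ[R] M} (hfg : ∀ x, f (g x) = x)
    (hf : ∀ x ∈ W, f x ∈ W) (hg : ∀ x ∈ W, g x ∈ W) : W.map f = W :=
  le_antisymm (Submodule.map_le_iff_le_comap.2 hf) fun x hx => ⟨g x, hg x hx, hfg x⟩

theorem Submodule.coe_pow_apply_of_coe_apply {R M : Type*} [Semiring R] [TopologicalSpace M]
    [AddCommMonoid M] [Module R M] {W : Submodule R M} {S : W →L[R] W} {T : M →L[R] M}
    (hS : ∀ x : W, (S x : M) = T x) (m : ℕ) (x : W) : ((S ^ m) x : M) = (T ^ m) x := by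
  induction m generalizing x with
  | zero => rfl
  | succ m ih => rw [pow_succ, pow_succ, mul_apply_eq_comp, mul_apply_eq_comp, ih, hS]

section Reducing

variable {𝕜 E : Type*} [RCLike 𝕜] [NormedAddCommGroup E] [InnerProductSpace 𝕜 E]
  [CompleteSpace E] {W : Submodule 𝕜 E} {T : E →L[𝕜] E}

theorem Submodule.inf_orthogonal_map_eq_inf_ker (hW : ∀ x ∈ W, adjoint T x ∈ W) :
    W ⊓ (W.map (T : E →ₗ[𝕜] E))ᗮ = W ⊓ LinearMap.ker (adjoint T : E →ₗ[𝕜] E) := by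
  ext x
  simp only [Submodule.mem_inf, Submodule.mem_orthogonal', Submodule.mem_map, LinearMap.mem_ker,
    coe_coe]
  refine and_congr_right fun hx => ⟨fun hperp => ?_, fun h0 => ?_⟩
  · exact inner_self_eq_zero.mp <|
      (adjoint_inner_left T _ x).trans (hperp _ ⟨_, hW x hx, rfl⟩)
  · rintro _ ⟨y, -, rfl⟩
    rw [← adjoint_inner_left, h0, inner_zero_left]

theorem Submodule.mem_of_apply_mem_of_reduces [W.HasOrthogonalProjection]
    (hT : Function.Injective T) (hTW : ∀ x ∈ W, T x ∈ W) (hW : ∀ x ∈ W, adjoint T x ∈ W)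
    {y : E} (hy : T y ∈ W) : y ∈ W := by
  have hTWperp : ∀ z ∈ Wᗮ, T z ∈ Wᗮ :=
    (Module.End.mem_invtSubmodule_iff_forall_mem_of_mem _).mp <| orthogonal_mem_invtSubmodule <|
      (Module.End.mem_invtSubmodule_iff_forall_mem_of_mem _).mpr hW
  -- `T` maps the `Wᗮ`-component of `y` into `W ⊓ Wᗮ = ⊥`.
  have hperp : T (y - W.starProjection y) ∈ W ⊓ Wᗮ := by
    refine ⟨?_, hTWperp _ (W.sub_starProjection_mem_orthogonal y)⟩
    rw [map_sub]
    exact W.sub_mem hy (hTW _ (W.starProjection_apply_mem y))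
  rw [W.inf_orthogonal_eq_bot, Submodule.mem_bot, ← map_zero T] at hperp
  rw [sub_eq_zero.mp (hT hperp)]
  exact W.starProjection_apply_mem y

theorem Submodule.coe_adjoint_apply_of_coe_apply [CompleteSpace W]
    (hW : ∀ x ∈ W, adjoint T x ∈ W) {S : W →L[𝕜] W} (hS : ∀ x : W, (S x : E) = T x) (x : W) :
    (adjoint S x : E) = adjoint T x := by
  suffices adjoint S x = ⟨adjoint T x, hW x x.2⟩ by rw [this]
  refine ext_inner_right 𝕜 fun v => ?_
  rw [adjoint_inner_left, Submodule.coe_inner, Submodule.coe_inner, hS, adjoint_inner_left]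

end Reducing

section NearIsometry

variable {K : Type*} [NormedAddCommGroup K] [InnerProductSpace ℂ K] [CompleteSpace K]
  {T : K →L[ℂ] K}

theorem IsNearIsometry.injective (hT : IsNearIsometry T) : Function.Injective T := by
  obtain ⟨δ, hδ, hbound⟩ := hT.1
  refine (injective_iff_map_eq_zero T).mpr fun x hx => norm_eq_zero.mp ?_
  have := (hbound x).1
  rw [hx, norm_zero] at this
  exact le_antisymm (nonpos_of_mul_nonpos_right this hδ) (norm_nonneg x)

theorem IsNearIsometry.restrict (hT : IsNearIsometry T) {W : Submodule ℂ K} [CompleteSpace W]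
    (hTW : ∀ x ∈ W, T x ∈ W) (hW : ∀ x ∈ W, adjoint T x ∈ W) (S : W →L[ℂ] W)
    (hS : ∀ x : W, (S x : K) = T x) : IsNearIsometry S := by
  have hinj := hT.injective
  obtain ⟨⟨δ, hδ, hbound⟩, hrange⟩ := hT
  refine ⟨⟨δ, hδ, fun x => ?_⟩, fun m x => ?_⟩
  · rw [← W.norm_coe, ← W.norm_coe, hS]
    exact hbound x
  · have hcoe :
        ((adjoint S ^ m) ((S ^ (m + 1)) x) : K) = (adjoint T ^ m) ((T ^ (m + 1)) x) := by
      rw [W.coe_pow_apply_of_coe_apply (W.coe_adjoint_apply_of_coe_apply hW hS),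
        W.coe_pow_apply_of_coe_apply hS]
    obtain ⟨y, hy⟩ := hrange m x
    have hyW : y ∈ W := W.mem_of_apply_mem_of_reduces hinj hTW hW (hy ▸ hcoe ▸ Subtype.prop _)
    exact ⟨⟨y, hyW⟩, Subtype.ext <| by rw [hcoe, hy, hS]⟩

end NearIsometry

section WA

variable {H : Type*} [NormedAddCommGroup H] [InnerProductSpace ℂ H] [CompleteSpace H] {n : ℕ}
  {T : Fin n → H →L[ℂ] H}

theorem mem_WA_iff {A : Set (Fin n)} {x : H} : x ∈ WA T A ↔ ∀ i ∈ A, adjoint (T i) x = 0 := by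
  simp [WA, Submodule.mem_iInf, LinearMap.mem_ker]

theorem WA_union_singleton (A : Set (Fin n)) (j : Fin n) :
    WA T (A ∪ {j}) = WA T A ⊓ LinearMap.ker (adjoint (T j) : H →ₗ[ℂ] H) := by
  ext x
  simp [mem_WA_iff, or_imp, forall_and, and_comm]

theorem apply_mem_WA_of_intertwines {A : Set (Fin n)} {B : H →L[ℂ] H}
    (hB : ∀ i ∈ A, ∃ C, adjoint (T i) * B = C * adjoint (T i)) {x : H} (hx : x ∈ WA T A) :
    B x ∈ WA T A := by
  rw [mem_WA_iff] at hx ⊢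
  intro i hi
  obtain ⟨C, hC⟩ := hB i hi
  rw [← mul_apply_eq_comp, hC, mul_apply_eq_comp, hx i hi, map_zero]

end WA

namespace IsDoublyTwisted

variable {H : Type*} [NormedAddCommGroup H] [InnerProductSpace ℂ H] [CompleteSpace H] {n : ℕ}
  {T : Fin n → H →L[ℂ] H} {U : Fin n → Fin n → H →L[ℂ] H} {i j : Fin n}

theorem mem_unitary (h : IsDoublyTwisted T U) (hij : i ≠ j) : U i j ∈ unitary (H →L[ℂ] H) := by
  rw [Unitary.mem_iff, star_eq_adjoint]
  exact (h.2.1 i j hij).symm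

theorem U_apply_adjoint_U_apply (h : IsDoublyTwisted T U) (hij : i ≠ j) (x : H) :
    U i j (adjoint (U i j) x) = x := by
  rw [← mul_apply_eq_comp, (h.2.1 i j hij).1, one_apply_eq_self]

theorem U_swap (h : IsDoublyTwisted T U) (hij : i ≠ j) : U j i = adjoint (U i j) := by
  rcases hij.lt_or_gt with hlt | hgt
  · exact h.2.2.1 i j hlt
  · rw [h.2.2.1 j i hgt, adjoint_adjoint]

theorem commute_T_U (h : IsDoublyTwisted T U) (k : Fin n) (hij : i ≠ j) :
    Commute (T k) (U i j) :=
  h.2.2.2.2.2.1 k i j hij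

theorem commute_adjoint_T_U (h : IsDoublyTwisted T U) (k : Fin n) (hij : i ≠ j) :
    Commute (adjoint (T k)) (U i j) := by
  simpa only [star_eq_adjoint] using
    (h.commute_T_U k hij).star_left_of_mem_unitary (h.mem_unitary hij)

theorem commute_adjoint_T_adjoint_U (h : IsDoublyTwisted T U) (k : Fin n) (hij : i ≠ j) :
    Commute (adjoint (T k)) (adjoint (U i j)) := by
  simpa only [star_eq_adjoint] using commute_star_star.mpr (h.commute_T_U k hij)

theorem T_mul_T (h : IsDoublyTwisted T U) (hij : i ≠ j) : T i * T j = U i j * (T j * T i) := by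
  rcases hij.lt_or_gt with hlt | hgt
  · exact h.2.2.2.2.2.2 i j hlt
  · rw [h.2.2.2.2.2.2 j i hgt, h.U_swap hij, ← mul_assoc, ← star_eq_adjoint,
      Unitary.mul_star_self_of_mem (h.mem_unitary hij), one_mul]

theorem adjoint_T_mul_T (h : IsDoublyTwisted T U) (hij : i ≠ j) :
    adjoint (T i) * T j = adjoint (U i j) * (T j * adjoint (T i)) := by
  rcases hij.lt_or_gt with hlt | hgt
  · exact h.2.2.2.2.1 i j hlt
  · have e := congrArg star (h.2.2.2.2.1 j i hgt)
    simp only [star_mul, star_eq_adjoint, adjoint_adjoint] at e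
    rw [e, mul_assoc, (h.commute_adjoint_T_U i hij.symm).eq, ← mul_assoc,
      (h.commute_T_U j hij.symm).eq, mul_assoc, h.U_swap hij]

theorem adjoint_T_mul_adjoint_T (h : IsDoublyTwisted T U) (hij : i ≠ j) :
    adjoint (T i) * adjoint (T j) = adjoint (T j) * adjoint (U j i) * adjoint (T i) := by
  have e := congrArg star (h.T_mul_T hij.symm)
  simp only [star_mul, star_eq_adjoint] at e
  rw [e, mul_assoc, mul_assoc, (h.commute_adjoint_T_adjoint_U i hij.symm).eq]

variable {A : Set (Fin n)} {x : H}

theorem T_apply_mem_WA (h : IsDoublyTwisted T U) (hj : j ∉ A) (hx : x ∈ WA T A) :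
    T j x ∈ WA T A :=
  apply_mem_WA_of_intertwines (fun i hi => ⟨adjoint (U i j) * T j, by
    rw [h.adjoint_T_mul_T (ne_of_mem_of_not_mem hi hj), mul_assoc]⟩) hx

theorem adjoint_T_apply_mem_WA (h : IsDoublyTwisted T U) (hj : j ∉ A) (hx : x ∈ WA T A) :
    adjoint (T j) x ∈ WA T A :=
  apply_mem_WA_of_intertwines (fun _ hi =>
    ⟨_, h.adjoint_T_mul_adjoint_T (ne_of_mem_of_not_mem hi hj)⟩) hx

theorem U_apply_mem_WA (h : IsDoublyTwisted T U) (hij : i ≠ j) (hx : x ∈ WA T A) :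
    U i j x ∈ WA T A :=
  apply_mem_WA_of_intertwines (fun k _ => ⟨_, (h.commute_adjoint_T_U k hij).eq⟩) hx

theorem adjoint_U_apply_mem_WA (h : IsDoublyTwisted T U) (hij : i ≠ j) (hx : x ∈ WA T A) :
    adjoint (U i j) x ∈ WA T A :=
  apply_mem_WA_of_intertwines (fun k _ => ⟨_, (h.commute_adjoint_T_adjoint_U k hij).eq⟩) hx

end IsDoublyTwisted

/-- Properties of `W_A` for a doubly twisted near-isometry: for `j ∉ A`,
(i) `W_A` reduces `T_j`; (ii) `W_A ⊖ T_j W_A = W_{A ∪ {j}}`; (iii) `W_A`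
reduces every `U_{ij}` and `U_{ij} W_A = W_A`; (iv) the restriction of `T_j`
to `W_A` is a near-isometry. -/
theorem stmt12 {H : Type*} [NormedAddCommGroup H] [InnerProductSpace ℂ H] [CompleteSpace H]
    {n : ℕ} (T : Fin n → H →L[ℂ] H) (U : Fin n → Fin n → H →L[ℂ] H)
    (h : IsDoublyTwisted T U) (A : Set (Fin n)) [CompleteSpace (WA T A)]
    (j : Fin n) (hj : j ∉ A) :
    (∀ x ∈ WA T A, T j x ∈ WA T A ∧ adjoint (T j) x ∈ WA T A) ∧
    (WA T A ⊓ ((WA T A).map (T j : H →ₗ[ℂ] H))ᗮ = WA T (A ∪ {j})) ∧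
    (∀ i j' : Fin n, i ≠ j' →
      ((∀ x ∈ WA T A, U i j' x ∈ WA T A ∧ adjoint (U i j') x ∈ WA T A) ∧
        (WA T A).map (U i j' : H →ₗ[ℂ] H) = WA T A)) ∧
    (∀ S : WA T A →L[ℂ] WA T A, (∀ x : WA T A, (S x : H) = T j x) →
      IsNearIsometry S) := by
  have hT : ∀ x ∈ WA T A, T j x ∈ WA T A := fun _ => h.T_apply_mem_WA hj
  have hT' : ∀ x ∈ WA T A, adjoint (T j) x ∈ WA T A := fun _ => h.adjoint_T_apply_mem_WA hj
  refine ⟨fun x hx => ⟨hT x hx, hT' x hx⟩, ?_, fun i j' hij => ?_,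
    fun S hS => (h.1 j).restrict hT hT' S hS⟩
  · rw [Submodule.inf_orthogonal_map_eq_inf_ker hT', WA_union_singleton]
  · have hU : ∀ x ∈ WA T A, U i j' x ∈ WA T A := fun _ => h.U_apply_mem_WA hij
    have hU' : ∀ x ∈ WA T A, adjoint (U i j') x ∈ WA T A :=
      fun _ => h.adjoint_U_apply_mem_WA hij
    exact ⟨fun x hx => ⟨hU x hx, hU' x hx⟩,
      Submodule.map_eq_self_of_rightInverse (h.U_apply_adjoint_U_apply hij) hU hU'⟩
end
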